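/- arXiv:1603.03871 — 3 statements merged into one kernel-verified Lean document; each statement's English description precedes it below -/
import Mathlib

section
/- Let e, e′ be orthogonal unit vectors in ℝ², ρ a norm on ℝ², and θ± the one-sided derivatives of s ↦ ρ(e + s e′) at s = 0. Then for any t₁,…,tₙ ∈ ℝ and u₁,…,uₙ ∈ ℝ with Σᵢ uᵢ = 0, one has Σᵢ ρ(tᵢ e + uᵢ e′) ≥ (Σᵢ tᵢ) ρ(e) + ((θ⁺ − θ⁻)/2) Σᵢ |uᵢ|. -/
open Set Metric MeasureTheory Filter Pointwise Asymptotics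
open Topology

noncomputable section

abbrev E2 := EuclideanSpace ℝ (Fin 2)

/-- `ρ` is a norm on the plane. -/
def IsNorm (ρ : E2 → ℝ) : Prop :=
  (∀ x, ρ x = 0 ↔ x = 0) ∧ (∀ (c : ℝ) (x : E2), ρ (c • x) = |c| * ρ x) ∧
    ∀ x y, ρ (x + y) ≤ ρ x + ρ y

/-- The `ρ`-length of a curve `γ` on `[0,1]`, as the supremum over inscribed polygons. -/
def polyPerim (ρ : E2 → ℝ) (γ : ℝ → E2) : ℝ :=
  sSup {L | ∃ n : ℕ, ∃ t : Fin (n + 1) → ℝ, StrictMono t ∧ t 0 = 0 ∧ t (Fin.last n) = 1 ∧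
    L = ∑ i : Fin n, ρ (γ (t i.succ) - γ (t i.castSucc))}

/-- `γ` is a simple closed curve on `[0,1]` parametrizing the boundary of `U`. -/
def JordanParam (U : Set E2) (γ : ℝ → E2) : Prop :=
  ContinuousOn γ (Icc 0 1) ∧ γ 0 = γ 1 ∧ InjOn γ (Ico 0 1) ∧ γ '' Icc 0 1 = frontier U

/-- `U` is a Jordan domain. -/
def IsJordanDomain (U : Set E2) : Prop :=
  IsOpen U ∧ Bornology.IsBounded U ∧ ∃ γ : ℝ → E2, JordanParam U γ

/-- The `ρ`-perimeter of a set. -/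
def setPerim (ρ : E2 → ℝ) (U : Set E2) : ℝ :=
  sSup {L | ∃ γ : ℝ → E2, JordanParam U γ ∧ L = polyPerim ρ γ}

/-- The principal Dirichlet eigenvalue of the negative Laplacian on `U`. -/
def eigen (U : Set E2) : ℝ :=
  sInf {L | ∃ g : E2 → ℝ, ContDiff ℝ (⊤ : ℕ∞) g ∧ tsupport g ⊆ U ∧ (∫ x, (g x) ^ 2) = 1 ∧
    L = ∫ x, ‖gradient g x‖ ^ 2}

/-- The functional `ℱ = λ + 𝒫`. -/
def Ffun (ρ : E2 → ℝ) (U : Set E2) : ℝ := eigen U + setPerim ρ U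

lemma key_aux (ρ : E2 → ℝ) (hρ : IsNorm ρ) (e e' : E2) (θ : ℝ)
    (hθ : HasDerivWithinAt (fun s : ℝ => ρ (e + s • e')) θ (Ici 0) 0) :
    ∀ t u : ℝ, 0 ≤ u → t * ρ e + θ * u ≤ ρ (t • e + u • e') := by
  obtain ⟨h0, hhom, htri⟩ := hρ
  have hρ0 : ρ 0 = 0 := (h0 0).2 rfl
  have hneg : ∀ x : E2, ρ (-x) = ρ x := fun x => by
    have := hhom (-1) x; simpa using this
  set f : ℝ → ℝ := fun s => ρ (e + s • e') with hfdef
  have hf0 : f 0 = ρ e := by simp [hfdef]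
  have hslope : Tendsto (slope f 0) (𝓝[>] 0) (𝓝 θ) := by
    have h := hasDerivWithinAt_iff_tendsto_slope.1 hθ
    rwa [show (Ici (0:ℝ)) \ {0} = Ioi 0 by simp [Ici_sdiff_left]] at h
  -- θ ≤ ρ e'
  have hθe' : θ ≤ ρ e' := by
    refine le_of_tendsto hslope ?_
    filter_upwards [self_mem_nhdsWithin] with r (hr : 0 < r)
    have h1 : f r ≤ ρ e + r * ρ e' := by
      calc f r ≤ ρ e + ρ (r • e') := htri e (r • e')
        _ = ρ e + r * ρ e' := by rw [hhom, abs_of_pos hr]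
    have : slope f 0 r = (f r - f 0) / r := by simp [slope_def_field]
    rw [this, hf0, div_le_iff₀ hr]
    linarith [h1]
  -- θ * s ≤ f s - f 0 for s ≥ 0
  have hkey : ∀ s : ℝ, 0 ≤ s → f 0 + θ * s ≤ f s := by
    intro s hs
    rcases hs.lt_or_eq with hs | hs
    · have hC : θ ≤ (f s - f 0) / s := by
        refine le_of_tendsto hslope ?_
        filter_upwards [Ioo_mem_nhdsGT_of_mem (by constructor <;> simp [hs] : (0:ℝ) ∈ Ico 0 s)]
          with r hr
        obtain ⟨hr0, hrs⟩ := hr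
        have hconv : f r ≤ (1 - r/s) * f 0 + (r/s) * f s := by
          have hrs' : (r/s) * s = r := div_mul_cancel₀ r hs.ne'
          have hx : e + r • e' = (1 - r/s) • e + (r/s) • (e + s • e') := by
            rw [smul_add, smul_smul, hrs', ← add_assoc, ← add_smul, sub_add_cancel, one_smul]
          rw [hfdef]
          calc ρ (e + r • e') = ρ ((1 - r/s) • e + (r/s) • (e + s • e')) := by rw [hx]
            _ ≤ ρ ((1 - r/s) • e) + ρ ((r/s) • (e + s • e')) := htri _ _
            _ = (1 - r/s) * f 0 + (r/s) * f s := by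
                have h1rs : (0:ℝ) ≤ 1 - r/s := by
                  have := (div_le_one hs).2 hrs.le; linarith
                rw [hhom, hhom, abs_of_nonneg h1rs, abs_of_nonneg (by positivity : (0:ℝ) ≤ r/s)]
                rw [hf0]
          
        have : slope f 0 r = (f r - f 0) / r := by simp [slope_def_field]
        rw [this, div_le_div_iff₀ hr0 hs]
        have h2 : (f r - f 0) * s ≤ (r/s * (f s - f 0)) * s := by nlinarith
        calc (f r - f 0) * s ≤ r/s * (f s - f 0) * s := h2
          _ = (f s - f 0) * r := by field_simp
      have h := (le_div_iff₀ hs).1 hC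
      linarith
    · simp [← hs]
  intro t u hu
  rcases le_or_gt t 0 with ht | ht
  · -- t ≤ 0 : reverse triangle
    have h1 : ρ (u • e') ≤ ρ (t • e + u • e') + ρ (t • e) := by
      have : u • e' = (t • e + u • e') + (-(t • e)) := by abel
      calc ρ (u • e') = ρ ((t • e + u • e') + (-(t • e))) := by rw [← this]
        _ ≤ ρ (t • e + u • e') + ρ (-(t • e)) := htri _ _
        _ = ρ (t • e + u • e') + ρ (t • e) := by rw [hneg]
    rw [hhom, hhom, abs_of_nonneg hu, abs_of_nonpos ht] at h1
    have hnnρe : 0 ≤ ρ e := by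
      have h := htri e (-e); rw [add_neg_cancel, hρ0, hneg] at h; linarith
    nlinarith [mul_le_mul_of_nonneg_left hθe' hu]
  · -- t > 0
    have hx : t • e + u • e' = t • (e + (u/t) • e') := by
      rw [smul_add, smul_smul, mul_div_cancel₀ u ht.ne']
    rw [hx, hhom, abs_of_pos ht]
    have := hkey (u/t) (by positivity)
    rw [hf0] at this
    have h2 := mul_le_mul_of_nonneg_left this ht.le
    calc t * ρ e + θ * u = t * (ρ e + θ * (u/t)) := by field_simp
      _ ≤ t * f (u/t) := h2

/-- Summed lower bound on sums of `ρ`-lengths with vanishing total transverse displacement. -/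
theorem stmt3 (ρ : E2 → ℝ) (hρ : IsNorm ρ) (e e' : E2) (he : ‖e‖ = 1) (he' : ‖e'‖ = 1)
    (horth : (inner ℝ e e' : ℝ) = 0) (θm θp : ℝ)
    (hm : HasDerivWithinAt (fun s : ℝ => ρ (e + s • e')) θm (Iic 0) 0)
    (hp : HasDerivWithinAt (fun s : ℝ => ρ (e + s • e')) θp (Ici 0) 0) :
    ∀ (n : ℕ) (t u : Fin n → ℝ), (∑ i, u i) = 0 →
      (∑ i, t i) * ρ e + (θp - θm) / 2 * ∑ i, |u i| ≤ ∑ i, ρ (t i • e + u i • e') := by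
  have hkeyp := key_aux ρ hρ e e' θp hp
  have hkeym : ∀ t u : ℝ, 0 ≤ u → t * ρ e + (-θm) * u ≤ ρ (t • e + u • (-e')) := by
    apply key_aux ρ hρ e (-e')
    have hn : HasDerivWithinAt (fun s : ℝ => -s) (-1) (Ici 0) 0 :=
      (hasDerivAt_neg (0:ℝ)).hasDerivWithinAt
    have hcomp := HasDerivWithinAt.comp (x := (0:ℝ))
      (by simpa using hm) hn (fun x hx => by simpa using hx)
    have : ((fun s : ℝ => ρ (e + s • e')) ∘ fun s : ℝ => -s)
        = fun s : ℝ => ρ (e + s • (-e')) := by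
      funext s; simp [Function.comp, smul_neg, neg_smul]
    rw [this] at hcomp
    rw [show -θm = θm * -1 by ring]; exact hcomp
  intro n t u hu
  have hpt : ∀ i, t i * ρ e + ((θp + θm) / 2) * u i + (θp - θm) / 2 * |u i|
      ≤ ρ (t i • e + u i • e') := by
    intro i
    rcases le_or_gt 0 (u i) with h | h
    · have := hkeyp (t i) (u i) h
      rw [abs_of_nonneg h]; linarith
    · have h2 := hkeym (t i) (-u i) (by linarith)
      rw [neg_smul_neg] at h2
      rw [abs_of_neg h]; linarith
  calc (∑ i, t i) * ρ e + (θp - θm) / 2 * ∑ i, |u i|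
      = ∑ i, (t i * ρ e + ((θp + θm) / 2) * u i + (θp - θm) / 2 * |u i|) := by
        rw [Finset.sum_add_distrib, Finset.sum_add_distrib, ← Finset.sum_mul,
          ← Finset.mul_sum, ← Finset.mul_sum, hu]
        ring
    _ ≤ ∑ i, ρ (t i • e + u i • e') := Finset.sum_le_sum fun i _ => hpt i
end
end

section
/- Let U ⊆ ℝ² be a Jordan domain. Then the convex hull of U equals the interior of the convex hull of ∂U, i.e., every point of the convex hull of U can be written as a convex combination of points of ∂U. -/
open Set Metric MeasureTheory Filter Pointwise Asymptotics

noncomputable section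

lemma ray_frontier {U : Set E2} (hO : IsOpen U) (hB : Bornology.IsBounded U)
    {x : E2} (hx : x ∈ U) (v : E2) (hv : v ≠ 0) :
    ∃ s : ℝ, 0 < s ∧ x + s • v ∈ frontier U := by
  obtain ⟨R, hR⟩ := hB.subset_ball 0
  have hvpos : (0:ℝ) < ‖v‖ := norm_pos_iff.2 hv
  set S : Set ℝ := {t : ℝ | 0 ≤ t ∧ x + t • v ∉ U} with hS
  have hne : S.Nonempty := by
    refine ⟨(|R| + ‖x‖ + 1) / ‖v‖, le_of_lt (by positivity), fun hmem => ?_⟩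
    have h1 := hR hmem
    rw [mem_ball, dist_zero_right] at h1
    have h2 : ‖((|R| + ‖x‖ + 1) / ‖v‖) • v‖ - ‖x‖ ≤ ‖x + ((|R| + ‖x‖ + 1) / ‖v‖) • v‖ := by
      have := norm_add_le (-x) (x + ((|R| + ‖x‖ + 1) / ‖v‖) • v)
      simp only [norm_neg] at this
      linarith [this, (by abel : -x + (x + ((|R| + ‖x‖ + 1) / ‖v‖) • v) = ((|R| + ‖x‖ + 1) / ‖v‖) • v) ▸ this]
    have h3 : ‖((|R| + ‖x‖ + 1) / ‖v‖) • v‖ = |R| + ‖x‖ + 1 := by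
      rw [norm_smul, Real.norm_eq_abs, abs_of_pos (by positivity)]
      field_simp
    rw [h3] at h2
    have : R ≤ |R| := le_abs_self R
    linarith
  have hbd : BddBelow S := ⟨0, fun t ht => ht.1⟩
  set s := sInf S with hsdef
  have hs0 : 0 ≤ s := le_csInf hne fun t ht => ht.1
  have hlt : ∀ t, 0 ≤ t → t < s → x + t • v ∈ U := by
    intro t ht htlt
    by_contra h
    exact absurd (csInf_le hbd ⟨ht, h⟩) (not_le.2 htlt)
  have hc : Continuous (fun t : ℝ => x + t • v) := by continuity
  have hsn : x + s • v ∉ U := by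
    intro h
    have hnhds : (fun t : ℝ => x + t • v) ⁻¹' U ∈ nhds s :=
      (hc.continuousAt).preimage_mem_nhds (hO.mem_nhds h)
    obtain ⟨δ, hδ, hball⟩ := Metric.mem_nhds_iff.1 hnhds
    obtain ⟨t, htS, htlt⟩ := (csInf_lt_iff hbd hne).1 (show s < s + δ by linarith)
    have hts : s ≤ t := csInf_le hbd htS
    have : t ∈ Metric.ball s δ := by
      rw [mem_ball, Real.dist_eq, abs_of_nonneg (by linarith)]
      linarith
    exact htS.2 (hball this)
  have hspos : 0 < s := by
    rcases hs0.lt_or_eq with h | h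
    · exact h
    · exfalso; apply hsn; rw [← h]; simpa using hx
  refine ⟨s, hspos, ?_⟩
  rw [hO.frontier_eq]
  refine ⟨?_, hsn⟩
  have htend : Tendsto (fun t : ℝ => x + t • v) (nhdsWithin s (Iio s)) (nhds (x + s • v)) :=
    (hc.tendsto s).mono_left nhdsWithin_le_nhds
  refine mem_closure_of_tendsto htend ?_
  filter_upwards [Ioo_mem_nhdsLT_of_mem (show s ∈ Ioc 0 s from ⟨hspos, le_refl s⟩)] with t ht
  exact hlt t ht.1.le ht.2

lemma interior_closure_subset_self {s : Set E2} (hs : Convex ℝ s) (ho : IsOpen s)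
    (hne : s.Nonempty) : interior (closure s) ⊆ s := by
  intro y hy
  obtain ⟨x₀, hx₀⟩ := hne
  have hx₀i : x₀ ∈ interior s := by rwa [ho.interior_eq]
  have hg : Continuous (fun t : ℝ => y + t • (y - x₀)) := by continuity
  have h0 : (fun t : ℝ => y + t • (y - x₀)) 0 ∈ interior (closure s) := by simpa using hy
  have hnhds : (fun t : ℝ => y + t • (y - x₀)) ⁻¹' interior (closure s) ∈ nhds (0:ℝ) :=
    hg.continuousAt.preimage_mem_nhds (isOpen_interior.mem_nhds h0)
  obtain ⟨ε, hε, hball⟩ := Metric.mem_nhds_iff.1 hnhds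
  set t := ε / 2 with htdef
  have htpos : 0 < t := by positivity
  have hz : y + t • (y - x₀) ∈ closure s := by
    refine interior_subset (hball ?_)
    rw [mem_ball, Real.dist_eq, sub_zero, abs_of_pos htpos]
    linarith
  have hmem : y ∈ interior s := by
    refine hs.openSegment_interior_closure_subset_interior hx₀i hz ?_
    refine ⟨t / (1 + t), 1 / (1 + t), by positivity, by positivity, by field_simp; ring, ?_⟩
    have h1t : (1:ℝ) + t ≠ 0 := by positivity
    match_scalars <;> field_simp <;> ring
  rwa [ho.interior_eq] at hmem

lemma jordan_subset_hull {U : Set E2} (hO : IsOpen U) (hB : Bornology.IsBounded U) :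
    U ⊆ convexHull ℝ (frontier U) := by
  intro x hx
  set v : E2 := EuclideanSpace.single 0 1 with hvdef
  have hv : v ≠ 0 := by
    intro h
    have : ‖v‖ = 0 := by rw [h, norm_zero]
    rw [hvdef, EuclideanSpace.norm_single] at this
    norm_num at this
  obtain ⟨s, hs, hfs⟩ := ray_frontier hO hB hx v hv
  obtain ⟨s', hs', hfs'⟩ := ray_frontier hO hB hx (-v) (neg_ne_zero.2 hv)
  have hsum : (0:ℝ) < s + s' := by linarith
  refine segment_subset_convexHull hfs hfs' ⟨s' / (s + s'), s / (s + s'), by positivity, by positivity, by field_simp; ring, ?_⟩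
  have hne : s + s' ≠ 0 := ne_of_gt hsum
  match_scalars <;> field_simp <;> ring

/-- The convex hull of a Jordan domain is the interior of the convex hull of its boundary. -/
theorem stmt8 (U : Set E2) (hU : IsJordanDomain U) :
    convexHull ℝ U = interior (convexHull ℝ (frontier U)) := by
  obtain ⟨hO, hB, γ, hγc, hγ01, hinj, himg⟩ := hU
  have hUne : U.Nonempty := by
    by_contra h
    rw [not_nonempty_iff_eq_empty] at h
    have h1 : (γ '' Icc 0 1).Nonempty := ⟨γ 0, mem_image_of_mem _ (by norm_num)⟩
    rw [himg, h, frontier_empty] at h1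
    exact h1.ne_empty rfl
  have hopen' : convexHull ℝ U ⊆ interior (convexHull ℝ U) :=
    convexHull_min (interior_maximal (subset_convexHull ℝ U) hO) (convex_convexHull ℝ U).interior
  have hOpenHull : IsOpen (convexHull ℝ U) := subset_interior_iff_isOpen.mp hopen'
  apply subset_antisymm
  · exact interior_maximal (convexHull_min (jordan_subset_hull hO hB) (convex_convexHull ℝ _)) hOpenHull
  · have hclsub : convexHull ℝ (frontier U) ⊆ closure (convexHull ℝ U) :=
      convexHull_min (frontier_subset_closure.trans (closure_mono (subset_convexHull ℝ U)))
        (convex_convexHull ℝ U).closure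
    refine (interior_mono hclsub).trans ?_
    exact interior_closure_subset_self (convex_convexHull ℝ U) hOpenHull
      (hUne.mono (subset_convexHull ℝ U))
end
end

section
/- For n ≥ 1 and a > 0, let ρ(x) := |x₁|/n + n|x₂| on ℝ² and U_n^a := (0, n/a) × (0, a/n). With λ(U_n^a) = π²(a²/n² + n²/a²) and 𝒫(U_n^a) = 2(1/a + a), the quantity min_{t>0} [t^{−2}λ(U_n^a) + t𝒫(U_n^a)] equals 3·2^{−2/3}·(π²(a²/n² + n²/a²))^{1/3}·(2(1/a+a))^{2/3}, and for every a > 1 there exists N such that for all n ≥ N this value is strictly smaller than its value at a = 1. Hence for n large the minimizer of ℱ among rectangles is not the isoperimetric rectangle (0,n)×(0,1/n). -/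
open Set Metric MeasureTheory Filter Pointwise Asymptotics

noncomputable section

/-- The minimal value over dilations of `ℱ` on the rectangle `U_n^a` with
`λ(U_n^a) = π²(a²/n² + n²/a²)` and `𝒫(U_n^a) = 2(1/a + a)` for the norm
`ρ(x) = |x₁|/n + n|x₂|`. -/
def rectMin (n : ℕ) (a : ℝ) : ℝ :=
  3 * 2 ^ (-(2 : ℝ) / 3) * (Real.pi ^ 2 * (a ^ 2 / (n : ℝ) ^ 2 + (n : ℝ) ^ 2 / a ^ 2)) ^ ((1 : ℝ) / 3)
    * (2 * (1 / a + a)) ^ ((2 : ℝ) / 3)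

section Helpers

lemma cube_rpow {x : ℝ} (hx : 0 < x) : (x ^ ((1:ℝ)/3)) ^ 3 = x := by
  rw [← Real.rpow_natCast (x ^ ((1:ℝ)/3)) 3, ← Real.rpow_mul hx.le]
  norm_num

lemma minLemma (A B : ℝ) (hA : 0 < A) (hB : 0 < B) :
    IsLeast ((fun t : ℝ => A / t ^ 2 + t * B) '' Ioi (0:ℝ))
      (3 * 2 ^ (-(2:ℝ)/3) * A ^ ((1:ℝ)/3) * B ^ ((2:ℝ)/3)) := by
  set u := A ^ ((1:ℝ)/3) with hu_def
  set v := B ^ ((1:ℝ)/3) with hv_def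
  set c := (2:ℝ) ^ ((1:ℝ)/3) with hc_def
  have hu : 0 < u := Real.rpow_pos_of_pos hA _
  have hv : 0 < v := Real.rpow_pos_of_pos hB _
  have hc : 0 < c := Real.rpow_pos_of_pos two_pos _
  have hu3 : u ^ 3 = A := cube_rpow hA
  have hv3 : v ^ 3 = B := cube_rpow hB
  have hc3 : c ^ 3 = 2 := cube_rpow two_pos
  have hc2 : c ^ 2 = (2:ℝ) ^ ((2:ℝ)/3) := by
    rw [hc_def, ← Real.rpow_natCast ((2:ℝ) ^ ((1:ℝ)/3)) 2,
      ← Real.rpow_mul (by norm_num : (0:ℝ) ≤ 2)]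
    norm_num
  have hneg : (2:ℝ) ^ (-(2:ℝ)/3) = (c ^ 2)⁻¹ := by
    rw [hc2, ← Real.rpow_neg (by norm_num : (0:ℝ) ≤ 2)]
    norm_num
  have hv2 : B ^ ((2:ℝ)/3) = v ^ 2 := by
    rw [hv_def, ← Real.rpow_natCast (B ^ ((1:ℝ)/3)) 2, ← Real.rpow_mul hB.le]
    norm_num
  have hM : 3 * 2 ^ (-(2:ℝ)/3) * A ^ ((1:ℝ)/3) * B ^ ((2:ℝ)/3) = 3 * u * v ^ 2 / c ^ 2 := by
    rw [hneg, hv2, ← hu_def]; field_simp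
  rw [hM]
  constructor
  · refine ⟨c * u / v, by exact div_pos (mul_pos hc hu) hv, ?_⟩
    show A / (c * u / v) ^ 2 + (c * u / v) * B = 3 * u * v ^ 2 / c ^ 2
    rw [← hu3, ← hv3]
    field_simp
    linear_combination hc3
  · rintro x ⟨t, ht, rfl⟩
    simp only [mem_Ioi] at ht
    have expand : c * (c^2*u^3 + c^2*t^3*v^3 - 3*u*v^2*t^2) = (t*v - c*u)^2 * (2*t*v + c*u) := by
      linear_combination (t^3*v^3) * hc3
    have h2tv : 0 ≤ (t*v - c*u)^2 * (2*t*v + c*u) := by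
      apply mul_nonneg (sq_nonneg _)
      nlinarith [mul_pos ht hv, mul_pos hc hu]
    have key : 3*u*v^2*t^2 ≤ c^2*u^3 + c^2*t^3*v^3 := by nlinarith [expand, h2tv, hc]
    show 3 * u * v ^ 2 / c ^ 2 ≤ A / t ^ 2 + t * B
    rw [← hu3, ← hv3, div_le_iff₀ (by positivity : (0:ℝ) < c^2), ← sub_nonneg]
    have e : (u^3 / t^2 + t * v^3) * c^2 - 3*u*v^2 = (c^2*u^3 + c^2*t^3*v^3 - 3*u*v^2*t^2) / t^2 := by
      field_simp
    rw [e]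
    exact div_nonneg (by linarith) (by positivity)

lemma rpow_two_thirds {y : ℝ} (hy : 0 ≤ y) : y ^ ((2:ℝ)/3) = (y ^ 2) ^ ((1:ℝ)/3) := by
  rw [← Real.rpow_natCast y 2, ← Real.rpow_mul hy]
  norm_num

lemma cube_lt {x y x' y' : ℝ} (hx : 0 ≤ x) (hy : 0 ≤ y) (hx' : 0 ≤ x') (hy' : 0 ≤ y')
    (h : x * y ^ 2 < x' * y' ^ 2) :
    x ^ ((1:ℝ)/3) * y ^ ((2:ℝ)/3) < x' ^ ((1:ℝ)/3) * y' ^ ((2:ℝ)/3) := by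
  rw [rpow_two_thirds hy, rpow_two_thirds hy',
    ← Real.mul_rpow hx (by positivity), ← Real.mul_rpow hx' (by positivity)]
  exact Real.rpow_lt_rpow (by positivity) h (by norm_num)

end Helpers

/-- `min_{t>0} [t⁻²λ(U_n^a) + t𝒫(U_n^a)] = 3·2^{-2/3}λ(U_n^a)^{1/3}𝒫(U_n^a)^{2/3}`, and
for every `a > 1` this value eventually (in `n`) beats the isoperimetric choice `a = 1`. -/
theorem stmt18 :
    (∀ n : ℕ, 1 ≤ n → ∀ a : ℝ, 0 < a →
      IsLeast ((fun t : ℝ =>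
          Real.pi ^ 2 * (a ^ 2 / (n : ℝ) ^ 2 + (n : ℝ) ^ 2 / a ^ 2) / t ^ 2
            + t * (2 * (1 / a + a))) '' Ioi (0 : ℝ))
        (rectMin n a)) ∧
    ∀ a : ℝ, 1 < a → ∃ N : ℕ, ∀ n : ℕ, N ≤ n → 1 ≤ n → rectMin n a < rectMin n 1 := by
  constructor
  · intro n hn a ha
    have hn' : (0:ℝ) < (n:ℝ) := by exact_mod_cast Nat.lt_of_lt_of_le Nat.zero_lt_one hn
    have hA : 0 < Real.pi ^ 2 * (a ^ 2 / (n : ℝ) ^ 2 + (n : ℝ) ^ 2 / a ^ 2) :=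
      mul_pos (pow_pos Real.pi_pos 2)
        (add_pos (div_pos (pow_pos ha 2) (pow_pos hn' 2)) (div_pos (pow_pos hn' 2) (pow_pos ha 2)))
    have hB : 0 < 2 * (1 / a + a) := by
      have := one_div_pos.mpr ha; nlinarith
    exact minLemma _ _ hA hB
  · intro a ha
    show ∃ N : ℕ, ∀ n : ℕ, N ≤ n → 1 ≤ n →
      3 * 2 ^ (-(2 : ℝ) / 3) * (Real.pi ^ 2 * (a ^ 2 / (n : ℝ) ^ 2 + (n : ℝ) ^ 2 / a ^ 2)) ^ ((1 : ℝ) / 3)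
        * (2 * (1 / a + a)) ^ ((2 : ℝ) / 3) <
      3 * 2 ^ (-(2 : ℝ) / 3) * (Real.pi ^ 2 * ((1:ℝ) ^ 2 / (n : ℝ) ^ 2 + (n : ℝ) ^ 2 / (1:ℝ) ^ 2)) ^ ((1 : ℝ) / 3)
        * (2 * (1 / 1 + 1)) ^ ((2 : ℝ) / 3)
    have hapos : (0:ℝ) < a := lt_trans one_pos ha
    have hεpos : 0 < 4*a^4 - (1+a^2)^2 := by nlinarith [sq_nonneg a, sq_nonneg (a-1), sq_nonneg (a+1)]
    refine ⟨⌈(1+a^2)^2 * a^4 / (4*a^4 - (1+a^2)^2)⌉₊ + 1, fun n hn hn1 => ?_⟩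
    have hm1 : (1:ℝ) ≤ (n:ℝ) := by exact_mod_cast hn1
    have hmpos : (0:ℝ) < (n:ℝ) := by linarith
    have hmN : (1+a^2)^2 * a^4 / (4*a^4 - (1+a^2)^2) < (n:ℝ) := by
      calc (1+a^2)^2 * a^4 / (4*a^4 - (1+a^2)^2)
          ≤ (⌈(1+a^2)^2 * a^4 / (4*a^4 - (1+a^2)^2)⌉₊ : ℝ) := Nat.le_ceil _
      _ < (⌈(1+a^2)^2 * a^4 / (4*a^4 - (1+a^2)^2)⌉₊ : ℝ) + 1 := by linarith
      _ ≤ (n:ℝ) := by exact_mod_cast hn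
    have hpoly : (1+a^2)^2 * a^4 < (4*a^4 - (1+a^2)^2) * (n:ℝ)^4 := by
      have h1 : (1+a^2)^2 * a^4 < (n:ℝ) * (4*a^4 - (1+a^2)^2) := (div_lt_iff₀ hεpos).mp hmN
      have hn4 : (n:ℝ) ≤ (n:ℝ)^4 := le_self_pow₀ hm1 (by norm_num)
      nlinarith [mul_le_mul_of_nonneg_left hn4 hεpos.le]
    set m := (n:ℝ)
    have key : (a^2/m^2 + m^2/a^2) * (2*(1/a+a))^2 < ((1:ℝ)^2/m^2 + m^2/(1:ℝ)^2) * (2*(1/1+1))^2 := by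
      have e1 : (a^2/m^2 + m^2/a^2) * (2*(1/a+a))^2 = (4*(1+a^2)^2*(a^4+m^4))/(m^2*a^4) := by
        field_simp; ring
      have e2 : ((1:ℝ)^2/m^2 + m^2/(1:ℝ)^2) * (2*(1/1+1))^2 = (16*(1+m^4))/m^2 := by
        field_simp; ring
      rw [e1, e2, div_lt_div_iff₀ (by positivity) (by positivity)]
      nlinarith [mul_lt_mul_of_pos_right hpoly (pow_pos hmpos 2),
        mul_pos (mul_pos (pow_pos hmpos 2) (pow_pos hapos 4)) (by norm_num : (0:ℝ) < 16)]
    have hpi : (0:ℝ) < Real.pi ^ 2 := pow_pos Real.pi_pos 2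
    have h : (Real.pi^2 * (a^2/m^2 + m^2/a^2)) * (2*(1/a+a))^2
        < (Real.pi^2 * ((1:ℝ)^2/m^2 + m^2/(1:ℝ)^2)) * (2*(1/1+1))^2 := by
      calc (Real.pi^2 * (a^2/m^2 + m^2/a^2)) * (2*(1/a+a))^2
          = Real.pi^2 * ((a^2/m^2 + m^2/a^2) * (2*(1/a+a))^2) := by ring
        _ < Real.pi^2 * (((1:ℝ)^2/m^2 + m^2/(1:ℝ)^2) * (2*(1/1+1))^2) :=
            mul_lt_mul_of_pos_left key hpi
        _ = (Real.pi^2 * ((1:ℝ)^2/m^2 + m^2/(1:ℝ)^2)) * (2*(1/1+1))^2 := by ring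
    have hx : (0:ℝ) ≤ Real.pi^2 * (a^2/m^2 + m^2/a^2) := by
      have := div_pos (pow_pos hapos 2) (pow_pos hmpos 2)
      have := div_pos (pow_pos hmpos 2) (pow_pos hapos 2)
      nlinarith
    have hy : (0:ℝ) ≤ 2*(1/a+a) := by
      have := one_div_pos.mpr hapos; linarith
    have hx' : (0:ℝ) ≤ Real.pi^2 * ((1:ℝ)^2/m^2 + m^2/(1:ℝ)^2) := by
      have := div_pos (pow_pos one_pos 2) (pow_pos hmpos 2)
      have := div_pos (pow_pos hmpos 2) (pow_pos (one_pos) 2)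
      nlinarith
    have hy' : (0:ℝ) ≤ 2*((1:ℝ)/1+1) := by norm_num
    have hc := cube_lt hx hy hx' hy' h
    calc 3 * 2 ^ (-(2 : ℝ) / 3) * (Real.pi ^ 2 * (a ^ 2 / m ^ 2 + m ^ 2 / a ^ 2)) ^ ((1 : ℝ) / 3)
          * (2 * (1 / a + a)) ^ ((2 : ℝ) / 3)
        = (3 * 2 ^ (-(2 : ℝ) / 3)) * ((Real.pi ^ 2 * (a ^ 2 / m ^ 2 + m ^ 2 / a ^ 2)) ^ ((1 : ℝ) / 3)
          * (2 * (1 / a + a)) ^ ((2 : ℝ) / 3)) := by ring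
      _ < (3 * 2 ^ (-(2 : ℝ) / 3)) * ((Real.pi ^ 2 * ((1:ℝ) ^ 2 / m ^ 2 + m ^ 2 / (1:ℝ) ^ 2)) ^ ((1 : ℝ) / 3)
          * (2 * (1 / 1 + 1)) ^ ((2 : ℝ) / 3)) := by
            exact mul_lt_mul_of_pos_left hc (by positivity)
      _ = _ := by ring
end
end
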